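/- Let n ≥ 1 be an integer and let α > 0, β > 0, c > 0, η > 0, and γ ∈ (0,1]. There exists a constant C > 0 such that for all t > 0 and all D > 0, ∫₀^∞ s^{-(n+γ)/2} e^{-cD/s} ( ∫₀^∞ e^{-η s w} (t w)^α / (1 + (t w)^β) dw ) ds ≤ C t^α D^{-(n/2 + γ/2 + α)}. -/

import Mathlib

open MeasureTheory Set Real

/-!
Since `1 / (1 + (tw)^β) ≤ 1`, the inner integral is at most the Gamma integral
`t^α ∫ e^{-ηsw} w^α dw = Γ(α+1) t^α (ηs)^{-(α+1)}`. The outer integral is then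
`∫ s^{-p-1} e^{-cD/s} ds` with `p = n/2 + γ/2 + α`, which the substitution `s ↦ 1/s` turns into
the Gamma integral `Γ(p) (cD)^{-p}`.
-/

lemma lintegral_rpow_mul_exp_neg_mul_Ioi {a r : ℝ} (ha : 0 < a) (hr : 0 < r) :
    ∫⁻ t in Ioi 0, ENNReal.ofReal (t ^ (a - 1) * exp (-(r * t)))
      = ENNReal.ofReal (Gamma a * r ^ (-a)) := by
  have hint : IntegrableOn (fun t : ℝ => t ^ (a - 1) * exp (-(r * t))) (Ioi 0) := by
    simpa only [rpow_one, neg_mul] using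
      integrableOn_rpow_mul_exp_neg_mul_rpow (s := a - 1) (by linarith) zero_lt_one hr
  rw [← ofReal_integral_eq_lintegral_ofReal hint
    ((ae_restrict_mem measurableSet_Ioi).mono fun t (ht : 0 < t) => by positivity),
    integral_rpow_mul_exp_neg_mul_Ioi ha hr, one_div, inv_rpow hr.le, ← rpow_neg hr.le, mul_comm]

lemma lintegral_rpow_mul_exp_neg_div_Ioi {a r : ℝ} (ha : 0 < a) (hr : 0 < r) :
    ∫⁻ s in Ioi 0, ENNReal.ofReal (s ^ (-a - 1) * exp (-r / s))
      = ENNReal.ofReal (Gamma a * r ^ (-a)) := by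
  have hderiv : ∀ x ∈ Ioi (0 : ℝ), HasDerivWithinAt (·⁻¹) (-(x ^ 2)⁻¹) (Ioi 0) x :=
    fun x hx => (hasDerivAt_inv (ne_of_gt hx)).hasDerivWithinAt
  have hsubst := lintegral_image_eq_lintegral_abs_deriv_mul measurableSet_Ioi hderiv
    inv_injective.injOn fun t => ENNReal.ofReal (t ^ (a - 1) * exp (-(r * t)))
  have himage : (·⁻¹) '' Ioi (0 : ℝ) = Ioi 0 := by ext; simp
  rw [himage, lintegral_rpow_mul_exp_neg_mul_Ioi ha hr] at hsubst
  rw [hsubst]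
  refine setLIntegral_congr_fun measurableSet_Ioi fun s (hs : 0 < s) => ?_
  rw [← ENNReal.ofReal_mul (abs_nonneg _), abs_neg, abs_of_pos (by positivity), ← mul_assoc,
    inv_rpow hs.le, ← rpow_neg hs.le, ← rpow_natCast, ← rpow_neg hs.le, ← rpow_add hs,
    ← div_eq_mul_inv, neg_div]
  congr 3
  push_cast
  ring

lemma lintegral_exp_neg_mul_mul_rpow_div_one_add_rpow_le {b t α : ℝ} (β : ℝ) (hb : 0 < b)
    (ht : 0 ≤ t) (hα : -1 < α) :
    ∫⁻ w in Ioi 0, ENNReal.ofReal (exp (-(b * w)) * ((t * w) ^ α / (1 + (t * w) ^ β)))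
      ≤ ENNReal.ofReal (t ^ α * Gamma (α + 1) * b ^ (-(α + 1))) := by
  calc ∫⁻ w in Ioi 0, ENNReal.ofReal (exp (-(b * w)) * ((t * w) ^ α / (1 + (t * w) ^ β)))
      ≤ ∫⁻ w in Ioi 0, ENNReal.ofReal (t ^ α) *
          ENNReal.ofReal (w ^ (α + 1 - 1) * exp (-(b * w))) := by
        refine setLIntegral_mono' measurableSet_Ioi fun w (hw : 0 < w) => ?_
        have hfrac : (t * w) ^ α / (1 + (t * w) ^ β) ≤ (t * w) ^ α :=
          div_le_self (by positivity) (le_add_of_nonneg_right (by positivity))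
        rw [← ENNReal.ofReal_mul (by positivity), add_sub_cancel_right]
        refine ENNReal.ofReal_le_ofReal ?_
        calc exp (-(b * w)) * ((t * w) ^ α / (1 + (t * w) ^ β))
            ≤ exp (-(b * w)) * (t * w) ^ α := by gcongr
          _ = t ^ α * (w ^ α * exp (-(b * w))) := by rw [mul_rpow ht hw.le]; ring
    _ = ENNReal.ofReal (t ^ α * Gamma (α + 1) * b ^ (-(α + 1))) := by
        rw [lintegral_const_mul' _ _ ENNReal.ofReal_ne_top,
          lintegral_rpow_mul_exp_neg_mul_Ioi (by linarith) hb, ← ENNReal.ofReal_mul (by positivity),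
          mul_assoc]

lemma lintegral_rpow_mul_exp_neg_div_mul_laplace_le {q α r η t : ℝ} (β : ℝ) (hq : 0 < q + α)
    (hr : 0 < r) (hη : 0 < η) (ht : 0 ≤ t) (hα : -1 < α) :
    ∫⁻ s in Ioi 0, ENNReal.ofReal (s ^ (-q) * exp (-r / s)) *
        ∫⁻ w in Ioi 0, ENNReal.ofReal (exp (-(η * s * w)) * ((t * w) ^ α / (1 + (t * w) ^ β)))
      ≤ ENNReal.ofReal
          (t ^ α * Gamma (α + 1) * η ^ (-(α + 1)) * (Gamma (q + α) * r ^ (-(q + α)))) := by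
  have hΓ : 0 < Gamma (α + 1) := Gamma_pos_of_pos (by linarith)
  set K := t ^ α * Gamma (α + 1) * η ^ (-(α + 1))
  calc _ ≤ ∫⁻ s in Ioi 0,
          ENNReal.ofReal K * ENNReal.ofReal (s ^ (-(q + α) - 1) * exp (-r / s)) := by
        refine setLIntegral_mono' measurableSet_Ioi fun s (hs : 0 < s) => ?_
        calc _ ≤ ENNReal.ofReal (s ^ (-q) * exp (-r / s)) *
              ENNReal.ofReal (t ^ α * Gamma (α + 1) * (η * s) ^ (-(α + 1))) := by
              gcongr
              exact lintegral_exp_neg_mul_mul_rpow_div_one_add_rpow_le β (by positivity) ht hα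
          _ = _ := by
              rw [← ENNReal.ofReal_mul (by positivity), ← ENNReal.ofReal_mul (by positivity),
                mul_rpow hη.le hs.le, show -(q + α) - 1 = -q + -(α + 1) by ring, rpow_add hs]
              congr 1
              ring
    _ = _ := by
        rw [lintegral_const_mul' _ _ ENNReal.ofReal_ne_top,
          lintegral_rpow_mul_exp_neg_div_Ioi hq hr, ← ENNReal.ofReal_mul (by positivity)]

theorem stmt_2_general (n : ℕ) (α β c η γ : ℝ)
    (hα : 0 < α) (hc : 0 < c) (hη : 0 < η)
    (hγ0 : 0 < γ) :
    ∃ C > 0, ∀ t > (0:ℝ), ∀ D > (0:ℝ),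
      (∫⁻ s in Ioi (0:ℝ),
        ENNReal.ofReal (s ^ (-((n:ℝ) + γ)/2) * Real.exp (-(c * D) / s)) *
          ∫⁻ w in Ioi (0:ℝ),
            ENNReal.ofReal (Real.exp (-(η * s * w)) * ((t * w) ^ α / (1 + (t * w) ^ β))))
      ≤ ENNReal.ofReal (C * t ^ α * D ^ (-((n:ℝ)/2 + γ/2 + α))) := by
  have hexponent : ((n:ℝ) + γ) / 2 + α = (n:ℝ)/2 + γ/2 + α := by ring
  refine ⟨Gamma (α + 1) * η ^ (-(α + 1)) * Gamma ((n:ℝ)/2 + γ/2 + α) * c ^ (-((n:ℝ)/2 + γ/2 + α)),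
    by positivity, fun t ht D hD => ?_⟩
  have h := lintegral_rpow_mul_exp_neg_div_mul_laplace_le β (q := ((n:ℝ) + γ) / 2)
    (by positivity) (mul_pos hc hD) hη ht.le (by linarith)
  rw [hexponent, mul_rpow hc.le hD.le, ← neg_div] at h
  exact h.trans_eq (congrArg ENNReal.ofReal (by ring))

/-- The integral estimate underlying the Hölder-continuity kernel bound
`|K_{ψ(tL)}(x+h,y) − K_{ψ(tL)}(x,y)| ≤ C (|h|/|x−y|)^γ t^α / |x−y|^{n+2α}`,
with `D` playing the role of `|x−y|²`. -/
theorem stmt_2 (n : ℕ) (hn : 1 ≤ n) (α β c η γ : ℝ)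
    (hα : 0 < α) (hβ : 0 < β) (hc : 0 < c) (hη : 0 < η)
    (hγ0 : 0 < γ) (hγ1 : γ ≤ 1) :
    ∃ C > 0, ∀ t > (0:ℝ), ∀ D > (0:ℝ),
      (∫⁻ s in Ioi (0:ℝ),
        ENNReal.ofReal (s ^ (-((n:ℝ) + γ)/2) * Real.exp (-(c * D) / s)) *
          ∫⁻ w in Ioi (0:ℝ),
            ENNReal.ofReal (Real.exp (-(η * s * w)) * ((t * w) ^ α / (1 + (t * w) ^ β))))
      ≤ ENNReal.ofReal (C * t ^ α * D ^ (-((n:ℝ)/2 + γ/2 + α))) :=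
  stmt_2_general n α β c η γ hα hc hη hγ0
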